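/- arXiv:2102.03414 — 7 statements merged into one kernel-verified Lean document; each statement's English description precedes it below -/
import Mathlib

section
/- Let y* ∈ (0, η₂) and define u(y) := ((y*(1+ρx̲) − α^{−γ})/(ρλ))·(y/y*)^{λ} − x̲·y + α^{1−γ}/(δ(1−γ)) for y > 0. Then: (a) u'(y) < 0 and u''(y) > 0 for all y > 0; (b) lim_{y→+∞} u'(y) = −x̲ and lim_{y→+∞} y·u''(y) = 0; (c) y* − ρ·y*·u'(y*) = α^{−γ}; and (d) u satisfies −κ·y²·u''(y) + (r + ρ(1−α) − δ)·y·u'(y) + δ·u(y) = α^{1−γ}/(1−γ) − α·y for all y > 0. -/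
open Real Set Filter Topology

/-!
Write `w(y) = (y / y*)^λ`. Since `y · w' = λ w`, the Euler operator
`-κ y² ∂² + (r + ρ(1-α) - δ) y ∂ + δ` sends `w` to `-P(λ) w`, where
`P(λ) = κλ² - (κ + r + ρ(1-α) - δ)λ - δ`; the constant `λ` is the negative root of `P`, and the
affine part `-x̲ y + α^(1-γ)/(δ(1-γ))` accounts for the right-hand side. The condition `y* < η₂`
makes the coefficient of `w` in `u` positive, so with `λ < 0` the power term is decreasing and
convex, and its derivatives vanish at infinity.
-/

theorem quadratic_lower_root_neg {κ δ b : ℝ} (hκ : 0 < κ) (hδ : 0 < δ) :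
    1 / (2 * κ) * (b - √(b ^ 2 + 4 * δ * κ)) < 0 := by
  have hb : b < √(b ^ 2 + 4 * δ * κ) := by
    rcases le_or_gt b 0 with hb | hb
    · exact hb.trans_lt (Real.sqrt_pos.mpr (by positivity))
    · exact (Real.lt_sqrt hb.le).mpr (by nlinarith [mul_pos hδ hκ])
  exact mul_neg_of_pos_of_neg (by positivity) (by linarith)

theorem quadratic_lower_root_isRoot {κ c b : ℝ} (hκ : κ ≠ 0) (hdisc : 0 ≤ b ^ 2 + 4 * c * κ) :
    let l := 1 / (2 * κ) * (b - √(b ^ 2 + 4 * c * κ))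
    κ * l ^ 2 - b * l - c = 0 := by
  intro l
  have hroot := (quadratic_eq_zero_iff (b := -b) (c := -c) hκ (s := √(b ^ 2 + 4 * c * κ))
    (by rw [discrim, Real.mul_self_sqrt hdisc]; ring) l).mpr
    (Or.inr (by simp only [l]; field_simp))
  linear_combination hroot

theorem hasDerivAt_div_rpow {s y : ℝ} (hs : 0 < s) (hy : 0 < y) (p : ℝ) :
    HasDerivAt (fun z => (z / s) ^ p) (p / s * (y / s) ^ (p - 1)) y := by
  have := (Real.hasDerivAt_rpow_const (p := p) (Or.inl (div_pos hy hs).ne')).comp y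
    ((hasDerivAt_id y).div_const s)
  exact this.congr_deriv (by ring)

theorem rpow_sub_one_mul_self {x : ℝ} (hx : x ≠ 0) (p : ℝ) : x ^ (p - 1) * x = x ^ p := by
  rw [← Real.rpow_add_one hx, sub_add_cancel]

theorem tendsto_div_rpow_atTop_zero {s p : ℝ} (hs : 0 < s) (hp : p < 0) :
    Tendsto (fun y => (y / s) ^ p) atTop (𝓝 0) := by
  have := tendsto_rpow_neg_atTop (neg_pos.mpr hp)
  rw [neg_neg] at this
  exact this.comp (tendsto_id.atTop_div_const hs)

noncomputable def powAffine (A B K p s : ℝ) : ℝ → ℝ := fun z => A * (z / s) ^ p + B * z + K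

namespace powAffine

variable {A B K p s y : ℝ}

theorem deriv_eq (hs : 0 < s) (hy : 0 < y) :
    deriv (powAffine A B K p s) y = A * p / s * (y / s) ^ (p - 1) + B := by
  have := ((((hasDerivAt_div_rpow hs hy p).const_mul A).add
    ((hasDerivAt_id y).const_mul B)).add_const K)
  exact (this.congr_deriv (by ring)).deriv

theorem deriv_deriv_eq (hs : 0 < s) (hy : 0 < y) :
    deriv (deriv (powAffine A B K p s)) y = A * p * (p - 1) / s ^ 2 * (y / s) ^ (p - 2) := by
  have hloc : deriv (powAffine A B K p s) =ᶠ[𝓝 y] fun z => A * p / s * (z / s) ^ (p - 1) + B := by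
    filter_upwards [Ioi_mem_nhds hy] with z hz using deriv_eq hs hz
  rw [hloc.deriv_eq]
  have := ((hasDerivAt_div_rpow hs hy (p - 1)).const_mul (A * p / s)).add_const B
  exact (this.congr_deriv (by rw [show p - 1 - 1 = p - 2 by ring]; ring)).deriv

theorem mul_deriv_eq (hs : 0 < s) (hy : 0 < y) :
    y * deriv (powAffine A B K p s) y = p * A * (y / s) ^ p + B * y := by
  rw [deriv_eq hs hy]
  linear_combination (A * p) * rpow_sub_one_mul_self (div_pos hy hs).ne' p

theorem mul_deriv_deriv_eq (hs : 0 < s) (hy : 0 < y) :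
    y * deriv (deriv (powAffine A B K p s)) y = A * p * (p - 1) / s * (y / s) ^ (p - 1) := by
  rw [deriv_deriv_eq hs hy, show p - 2 = p - 1 - 1 by ring]
  linear_combination (A * p * (p - 1) / s) * rpow_sub_one_mul_self (div_pos hy hs).ne' (p - 1)

theorem sq_mul_deriv_deriv_eq (hs : 0 < s) (hy : 0 < y) :
    y ^ 2 * deriv (deriv (powAffine A B K p s)) y = p * (p - 1) * A * (y / s) ^ p := by
  rw [sq, mul_assoc, mul_deriv_deriv_eq hs hy]
  linear_combination (A * p * (p - 1)) * rpow_sub_one_mul_self (div_pos hy hs).ne' p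

theorem tendsto_deriv (hs : 0 < s) (hp : p < 1) :
    Tendsto (deriv (powAffine A B K p s)) atTop (𝓝 B) := by
  have := ((tendsto_div_rpow_atTop_zero hs (sub_neg.mpr hp)).const_mul (A * p / s)).add_const B
  rw [mul_zero, zero_add] at this
  exact this.congr' <| (eventually_gt_atTop 0).mono fun y hy => (deriv_eq hs hy).symm

theorem tendsto_mul_deriv_deriv (hs : 0 < s) (hp : p < 1) :
    Tendsto (fun y => y * deriv (deriv (powAffine A B K p s)) y) atTop (𝓝 0) := by
  have := (tendsto_div_rpow_atTop_zero hs (sub_neg.mpr hp)).const_mul (A * p * (p - 1) / s)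
  rw [mul_zero] at this
  exact this.congr' <| (eventually_gt_atTop 0).mono fun y hy => (mul_deriv_deriv_eq hs hy).symm

end powAffine

theorem explicit_u_properties_general
    (r μ σ ρ α δ γ κ xl lam η2 : ℝ)
    (hr : 0 < r) (hμ : r < μ) (hσ : 0 < σ) (hρ : 0 < ρ)
    (hα0 : 0 < α) (hα1 : α ≤ 1) (hδ : 0 < δ) (hγ : 1 < γ)
    (hκ : κ = (μ - r) ^ 2 / (2 * σ ^ 2))
    (hxl : xl = α / (r + ρ * (1 - α)))
    (hlam : lam = (1 / (2 * κ)) *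
      ((κ + r + ρ * (1 - α) - δ) -
        Real.sqrt ((κ + r + ρ * (1 - α) - δ) ^ 2 + 4 * δ * κ)))
    (hη2 : η2 = α ^ (-γ) / (1 + ρ * xl))
    (ys : ℝ) (hys0 : 0 < ys) (hys2 : ys < η2)
    (u : ℝ → ℝ)
    (hu : ∀ y, u y = ((ys * (1 + ρ * xl) - α ^ (-γ)) / (ρ * lam)) * (y / ys) ^ lam
      - xl * y + α ^ (1 - γ) / (δ * (1 - γ))) :
    (∀ y, 0 < y → deriv u y < 0 ∧ 0 < deriv (deriv u) y) ∧
    Tendsto (deriv u) atTop (𝓝 (-xl)) ∧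
    Tendsto (fun y => y * deriv (deriv u) y) atTop (𝓝 0) ∧
    ys - ρ * ys * deriv u ys = α ^ (-γ) ∧
    (∀ y, 0 < y →
      -κ * y ^ 2 * deriv (deriv u) y + (r + ρ * (1 - α) - δ) * y * deriv u y
        + δ * u y = α ^ (1 - γ) / (1 - γ) - α * y) := by
  set C := (ys * (1 + ρ * xl) - α ^ (-γ)) / (ρ * lam)
  set K := α ^ (1 - γ) / (δ * (1 - γ))
  have hu_eq : u = powAffine C (-xl) K lam ys := funext fun y => by rw [hu, powAffine]; ring
  subst hu_eq
  have hκ0 : 0 < κ := hκ ▸ div_pos (pow_pos (sub_pos.mpr hμ) 2) (by positivity)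
  have ha : 0 < r + ρ * (1 - α) := by nlinarith
  have hxl0 : 0 < xl := hxl ▸ div_pos hα0 ha
  have hlam0 : lam < 0 := hlam ▸ quadratic_lower_root_neg hκ0 hδ
  have hchar : κ * lam ^ 2 - (κ + r + ρ * (1 - α) - δ) * lam - δ = 0 :=
    hlam ▸ quadratic_lower_root_isRoot hκ0.ne' (by positivity)
  have hC : 0 < C := by
    have : ys * (1 + ρ * xl) < α ^ (-γ) := (lt_div_iff₀ (by positivity)).mp (hη2 ▸ hys2)
    exact div_pos_of_neg_of_neg (by linarith) (mul_neg_of_pos_of_neg hρ hlam0)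
  refine ⟨fun y hy => ⟨?_, ?_⟩, powAffine.tendsto_deriv hys0 (by linarith),
    powAffine.tendsto_mul_deriv_deriv hys0 (by linarith), ?_, fun y hy => ?_⟩
  · rw [powAffine.deriv_eq hys0 hy]
    have : C * lam / ys * (y / ys) ^ (lam - 1) < 0 :=
      mul_neg_of_neg_of_pos (div_neg_of_neg_of_pos (mul_neg_of_pos_of_neg hC hlam0) hys0)
        (by positivity)
    linarith
  · rw [powAffine.deriv_deriv_eq hys0 hy]
    have : 0 < C * lam * (lam - 1) := mul_pos_of_neg_of_neg (by nlinarith) (by linarith)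
    positivity
  · have hρlamC : ρ * lam * C = ys * (1 + ρ * xl) - α ^ (-γ) :=
      mul_div_cancel₀ _ (mul_ne_zero hρ.ne' hlam0.ne)
    rw [powAffine.deriv_eq hys0 hys0, div_self hys0.ne', Real.one_rpow]
    field_simp
    linear_combination -hρlamC
  · have hxl' : xl * (r + ρ * (1 - α)) = α := by rw [hxl]; field_simp
    have hK : δ * K = α ^ (1 - γ) / (1 - γ) := by
      have : (1 : ℝ) - γ ≠ 0 := by linarith
      simp only [K]; field_simp
    rw [mul_assoc, powAffine.sq_mul_deriv_deriv_eq hys0 hy, mul_assoc _ y,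
      powAffine.mul_deriv_eq hys0 hy, powAffine]
    linear_combination (-C * (y / ys) ^ lam) * hchar - y * hxl' + hK

/-- Properties of the explicit solution `u` of the linear Euler equation on `[y*, ∞)`:
`u` is strictly decreasing and strictly convex, `u' → -x̲` and `y u'' → 0` at `+∞`,
the free-boundary condition `y* - ρ y* u'(y*) = α^(-γ)` holds, and `u` satisfies the
linear Euler ODE for all `y > 0`. -/
theorem explicit_u_properties
    (r μ σ ρ α δ γ κ xl lam η1 η2 : ℝ)
    (hr : 0 < r) (hμ : r < μ) (hσ : 0 < σ) (hρ : 0 < ρ)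
    (hα0 : 0 < α) (hα1 : α ≤ 1) (hδ : 0 < δ) (hγ : 1 < γ)
    (hκ : κ = (μ - r) ^ 2 / (2 * σ ^ 2))
    (hxl : xl = α / (r + ρ * (1 - α)))
    (hlam : lam = (1 / (2 * κ)) *
      ((κ + r + ρ * (1 - α) - δ) -
        Real.sqrt ((κ + r + ρ * (1 - α) - δ) ^ 2 + 4 * δ * κ)))
    (hη1 : η1 = lam * α ^ (-γ) / ((lam - 1) * (1 + ρ * xl)))
    (hη2 : η2 = α ^ (-γ) / (1 + ρ * xl))
    (ys : ℝ) (hys0 : 0 < ys) (hys2 : ys < η2)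
    (u : ℝ → ℝ)
    (hu : ∀ y, u y = ((ys * (1 + ρ * xl) - α ^ (-γ)) / (ρ * lam)) * (y / ys) ^ lam
      - xl * y + α ^ (1 - γ) / (δ * (1 - γ))) :
    (∀ y, 0 < y → deriv u y < 0 ∧ 0 < deriv (deriv u) y) ∧
    Tendsto (deriv u) atTop (𝓝 (-xl)) ∧
    Tendsto (fun y => y * deriv (deriv u) y) atTop (𝓝 0) ∧
    ys - ρ * ys * deriv u ys = α ^ (-γ) ∧
    (∀ y, 0 < y →
      -κ * y ^ 2 * deriv (deriv u) y + (r + ρ * (1 - α) - δ) * y * deriv u y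
        + δ * u y = α ^ (1 - γ) / (1 - γ) - α * y) :=
  explicit_u_properties_general r μ σ ρ α δ γ κ xl lam η2 hr hμ hσ hρ hα0 hα1 hδ hγ hκ hxl hlam hη2
    ys hys0 hys2 u hu
end

section
/- Let 0 < a < b and let φ, H : (a,b) → ℝ be differentiable with φ > 0 on (a,b), satisfying the habit free-boundary ODE system on (a,b). Define u(y) := (1/δ)·[ φ(y)·H(y) + (γ/(1−γ))·φ(y)^{1−1/γ} + ((r+ρ−δ)/ρ)·(φ(y) − y) ]. Then y − ρ·y·u'(y) = φ(y) > 0 for all y ∈ (a,b), and u satisfies the nonlinear differential equation −κ·y²·u''(y) + (r + ρ − δ)·y·u'(y) + δ·u(y) = (γ/(1−γ))·( y − ρ·y·u'(y) )^{1−1/γ} for all y ∈ (a,b). -/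
open Real Set Filter Topology

/-! The habit system is built so that the value function `u` of the dual problem has the simple
derivative `u' = (1 - φ/y)/ρ`: in `δ u'` every term carrying the coefficient of `φ'` cancels.
Hence `y - ρ y u' = φ`, and `u''` only involves `φ'`, which the first equation of the system
expresses through `H`; the HJB equation then reduces to the definition of `u`. -/

noncomputable def habitDualValue (r ρ δ γ : ℝ) (φ H : ℝ → ℝ) (y : ℝ) : ℝ :=
  (1 / δ) * (φ y * H y + (γ / (1 - γ)) * φ y ^ (1 - 1 / γ) + ((r + ρ - δ) / ρ) * (φ y - y))

section

variable {r ρ δ γ : ℝ} {φ H : ℝ → ℝ} {y : ℝ}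

theorem hasDerivAt_habitDualValue (hρ : ρ ≠ 0) (hδ : δ ≠ 0) (hγ0 : γ ≠ 0) (hγ1 : γ ≠ 1)
    {c : ℝ} (hφ : 0 < φ y) (hφ' : HasDerivAt φ (c * φ y) y)
    (hH' : HasDerivAt H
      (c * (φ y ^ (-1 / γ) - H y - (r + ρ - δ) / ρ) + (r + ρ) / (ρ * φ y) - δ / (ρ * y)) y) :
    HasDerivAt (habitDualValue r ρ δ γ φ H) ((1 - φ y / y) / ρ) y := by
  have hpow : HasDerivAt (fun z => φ z ^ (1 - 1 / γ))
      (c * φ y * (1 - 1 / γ) * φ y ^ (-1 / γ)) y := by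
    convert hφ'.rpow_const (p := 1 - 1 / γ) (Or.inl hφ.ne') using 3
    ring
  have hγ1' : 1 - γ ≠ 0 := sub_ne_zero.mpr (Ne.symm hγ1)
  refine ((((hφ'.mul hH').add (hpow.const_mul (γ / (1 - γ)))).add
    ((hφ'.sub (hasDerivAt_id y)).const_mul ((r + ρ - δ) / ρ))).const_mul (1 / δ)).congr_deriv ?_
  field_simp
  ring

variable {c : ℝ → ℝ}

theorem deriv_habitDualValue_eventuallyEq (hρ : ρ ≠ 0) (hδ : δ ≠ 0) (hγ0 : γ ≠ 0) (hγ1 : γ ≠ 1)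
    (h : ∀ᶠ z in 𝓝 y, 0 < φ z ∧ HasDerivAt φ (c z * φ z) z ∧ HasDerivAt H
      (c z * (φ z ^ (-1 / γ) - H z - (r + ρ - δ) / ρ) + (r + ρ) / (ρ * φ z) - δ / (ρ * z)) z) :
    deriv (habitDualValue r ρ δ γ φ H) =ᶠ[𝓝 y] fun z => (1 - φ z / z) / ρ := by
  filter_upwards [h] with z ⟨hφ, hφ', hH'⟩
  exact (hasDerivAt_habitDualValue hρ hδ hγ0 hγ1 hφ hφ' hH').deriv

theorem hasDerivAt_deriv_habitDualValue (hρ : ρ ≠ 0) (hδ : δ ≠ 0) (hγ0 : γ ≠ 0) (hγ1 : γ ≠ 1)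
    (hy : y ≠ 0)
    (h : ∀ᶠ z in 𝓝 y, 0 < φ z ∧ HasDerivAt φ (c z * φ z) z ∧ HasDerivAt H
      (c z * (φ z ^ (-1 / γ) - H z - (r + ρ - δ) / ρ) + (r + ρ) / (ρ * φ z) - δ / (ρ * z)) z) :
    HasDerivAt (deriv (habitDualValue r ρ δ γ φ H)) ((φ y - c y * φ y * y) / y ^ 2 / ρ) y := by
  have hφ' : HasDerivAt φ (c y * φ y) y := h.self_of_nhds.2.1
  have hg : HasDerivAt (fun z => (1 - φ z / z) / ρ) ((φ y - c y * φ y * y) / y ^ 2 / ρ) y :=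
    (((hasDerivAt_const y 1).sub (hφ'.div (hasDerivAt_id y) hy)).div_const ρ).congr_deriv
      (by simp only [id]; ring)
  exact hg.congr_of_eventuallyEq (deriv_habitDualValue_eventuallyEq hρ hδ hγ0 hγ1 h)

theorem habitDualValue_hjb {κ : ℝ} (hκ : κ ≠ 0) (hρ : ρ ≠ 0) (hδ : δ ≠ 0) (hγ0 : γ ≠ 0)
    (hγ1 : γ ≠ 1) (hy : y ≠ 0)
    (h : ∀ᶠ z in 𝓝 y, 0 < φ z ∧ HasDerivAt φ (ρ / (κ * z) * (κ / ρ - H z) * φ z) z ∧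
      HasDerivAt H (ρ / (κ * z) * (κ / ρ - H z) * (φ z ^ (-1 / γ) - H z - (r + ρ - δ) / ρ)
        + (r + ρ) / (ρ * φ z) - δ / (ρ * z)) z) :
    let u := habitDualValue r ρ δ γ φ H
    (y - ρ * y * deriv u y = φ y ∧ 0 < y - ρ * y * deriv u y) ∧
      -κ * y ^ 2 * deriv (deriv u) y + (r + ρ - δ) * y * deriv u y + δ * u y
        = (γ / (1 - γ)) * (y - ρ * y * deriv u y) ^ (1 - 1 / γ) := by
  intro u
  have hu' : deriv u y = (1 - φ y / y) / ρ :=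
    (deriv_habitDualValue_eventuallyEq hρ hδ hγ0 hγ1 h).self_of_nhds
  have hu'' := (hasDerivAt_deriv_habitDualValue (c := fun z => ρ / (κ * z) * (κ / ρ - H z))
    hρ hδ hγ0 hγ1 hy h).deriv
  have hφu : y - ρ * y * deriv u y = φ y := by
    rw [hu']
    field_simp
    ring
  refine ⟨⟨hφu, hφu ▸ h.self_of_nhds.1⟩, ?_⟩
  rw [hφu, hu'', hu']
  simp only [u, habitDualValue]
  field_simp
  ring

end

theorem u_solves_nonlinear_dual_equation_general
    (r μ σ ρ δ γ κ : ℝ)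
    (hμ : r < μ) (hσ : 0 < σ) (hρ : 0 < ρ)
    (hδ : 0 < δ) (hγ : 1 < γ)
    (hκ : κ = (μ - r) ^ 2 / (2 * σ ^ 2))
    (a b : ℝ) (ha : 0 < a)
    (φ H : ℝ → ℝ)
    (hφpos : ∀ y ∈ Set.Ioo a b, 0 < φ y)
    (hφ' : ∀ y ∈ Set.Ioo a b,
      HasDerivAt φ ((ρ / (κ * y)) * (κ / ρ - H y) * φ y) y)
    (hH' : ∀ y ∈ Set.Ioo a b,
      HasDerivAt H ((ρ / (κ * y)) * (κ / ρ - H y) *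
          ((φ y) ^ (-1 / γ) - H y - (r + ρ - δ) / ρ)
        + (r + ρ) / (ρ * φ y) - δ / (ρ * y)) y)
    (u : ℝ → ℝ)
    (hu : ∀ y, u y = (1 / δ) * (φ y * H y + (γ / (1 - γ)) * (φ y) ^ (1 - 1 / γ)
      + ((r + ρ - δ) / ρ) * (φ y - y))) :
    ∀ y ∈ Set.Ioo a b,
      (y - ρ * y * deriv u y = φ y ∧ 0 < y - ρ * y * deriv u y) ∧
      -κ * y ^ 2 * deriv (deriv u) y + (r + ρ - δ) * y * deriv u y + δ * u y
        = (γ / (1 - γ)) * (y - ρ * y * deriv u y) ^ (1 - 1 / γ) := by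
  have hκ0 : κ ≠ 0 := by
    rw [hκ]
    have := sub_pos.mpr hμ
    positivity
  obtain rfl : u = habitDualValue r ρ δ γ φ H := funext hu
  intro y hy
  have h : ∀ᶠ z in 𝓝 y, z ∈ Set.Ioo a b := isOpen_Ioo.mem_nhds hy
  exact habitDualValue_hjb hκ0 hρ.ne' hδ.ne' (by positivity) hγ.ne' (ha.trans hy.1).ne'
    (h.mono fun z hz => ⟨hφpos z hz, hφ' z hz, hH' z hz⟩)

/-- If `(φ, H)` solves the habit free-boundary ODE system on `(a,b)` with `φ > 0`,
then the function `u` built from `(φ, H)` satisfies `y - ρ y u'(y) = φ(y) > 0` and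
the nonlinear HJB dual equation
`-κ y² u'' + (r + ρ - δ) y u' + δ u = (γ/(1-γ)) (y - ρ y u')^(1-1/γ)` on `(a,b)`. -/
theorem u_solves_nonlinear_dual_equation
    (r μ σ ρ α δ γ κ : ℝ)
    (hr : 0 < r) (hμ : r < μ) (hσ : 0 < σ) (hρ : 0 < ρ)
    (hα0 : 0 < α) (hα1 : α ≤ 1) (hδ : 0 < δ) (hγ : 1 < γ)
    (hκ : κ = (μ - r) ^ 2 / (2 * σ ^ 2))
    (a b : ℝ) (ha : 0 < a) (hab : a < b)
    (φ H : ℝ → ℝ)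
    (hφpos : ∀ y ∈ Set.Ioo a b, 0 < φ y)
    (hφ' : ∀ y ∈ Set.Ioo a b,
      HasDerivAt φ ((ρ / (κ * y)) * (κ / ρ - H y) * φ y) y)
    (hH' : ∀ y ∈ Set.Ioo a b,
      HasDerivAt H ((ρ / (κ * y)) * (κ / ρ - H y) *
          ((φ y) ^ (-1 / γ) - H y - (r + ρ - δ) / ρ)
        + (r + ρ) / (ρ * φ y) - δ / (ρ * y)) y)
    (u : ℝ → ℝ)
    (hu : ∀ y, u y = (1 / δ) * (φ y * H y + (γ / (1 - γ)) * (φ y) ^ (1 - 1 / γ)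
      + ((r + ρ - δ) / ρ) * (φ y - y))) :
    ∀ y ∈ Set.Ioo a b,
      (y - ρ * y * deriv u y = φ y ∧ 0 < y - ρ * y * deriv u y) ∧
      -κ * y ^ 2 * deriv (deriv u) y + (r + ρ - δ) * y * deriv u y + δ * u y
        = (γ / (1 - γ)) * (y - ρ * y * deriv u y) ^ (1 - 1 / γ) :=
  u_solves_nonlinear_dual_equation_general r μ σ ρ δ γ κ hμ hσ hρ hδ hγ hκ a b ha φ H hφpos hφ' hH'
    u hu
end

section
/- Let y* ∈ (η₁, η₂), set x* := α^{−γ}/(ρy*) − 1/ρ, and define v(x) := ((λ−1)/λ)·[ ρ·(y*)^{λ}/(α^{−γ} − y*(1+ρx̲)) ]^{1/(λ−1)}·(x − x̲)^{λ/(λ−1)} + α^{1−γ}/(δ(1−γ)) for x ∈ (x̲, x*]. Then: (a) x* > x̲; (b) v'(x) > 0 and v''(x) < 0 for all x ∈ (x̲, x*); (c) lim_{x→x̲⁺} v'(x) = +∞; (d) v'(x*) = y*, and hence (1+ρx*)·v'(x*) = α^{−γ}; (e) v satisfies κ·v'(x)²/v''(x) − α·(x/x̲ − 1)·v'(x) +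 δ·v(x) = α^{1−γ}/(1−γ) for all x ∈ (x̲, x*). -/
open Real Set Filter Topology

/-!
`λ` is the negative root of `κ λ² - (κ + r + ρ(1-α) - δ) λ - δ = 0`, so `p := λ/(λ-1) ∈ (0,1)` and
`v = ((λ-1)/λ) K (x - x̲)^p + const` with `K = C^(1/(λ-1))` is a concave power profile: its
derivative `K (x - x̲)^(1/(λ-1))` is positive, decreasing and blows up at `x̲`. The constant `C`
is chosen so that `C (x* - x̲) = (y*)^(λ-1)`, i.e. `v'(x*) = y*`. Substituting the profile into
the equation turns every non-constant term into a multiple of `(x - x̲)^p`, whose coefficient is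
`K/λ` times the quadratic in `λ`. The bounds `η₁ < y* < η₂` make `y*` and `C` positive and put
`x*` to the right of `x̲`.
-/

theorem quadratic_neg_root_spec {κ δ B lam : ℝ} (hκ : 0 < κ) (hδ : 0 < δ)
    (hlam : lam = 1 / (2 * κ) * (B - √(B ^ 2 + 4 * δ * κ))) :
    lam < 0 ∧ κ * lam ^ 2 - B * lam - δ = 0 := by
  have hdisc : B ^ 2 < B ^ 2 + 4 * δ * κ := by linarith [mul_pos (mul_pos four_pos hδ) hκ]
  have hB : B < √(B ^ 2 + 4 * δ * κ) := (le_abs_self B).trans_lt <| by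
    rw [← sqrt_sq_eq_abs]; exact sqrt_lt_sqrt (sq_nonneg B) hdisc
  have hsq := sq_sqrt ((sq_nonneg B).trans hdisc.le)
  refine ⟨hlam ▸ mul_neg_of_pos_of_neg (by positivity) (by linarith), ?_⟩
  have h2 : 2 * κ * lam = B - √(B ^ 2 + 4 * δ * κ) := by rw [hlam]; field_simp
  have h4 : 4 * κ * (κ * lam ^ 2 - B * lam - δ) = 0 := by
    linear_combination hsq + (2 * κ * lam - B - √(B ^ 2 + 4 * δ * κ)) * h2
  simpa [hκ.ne'] using h4

noncomputable def powerProfile (lam K a c x : ℝ) : ℝ :=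
  (lam - 1) / lam * K * (x - a) ^ (lam / (lam - 1)) + c

namespace powerProfile

variable {lam K a c x : ℝ}

theorem hasDerivAt (h0 : lam ≠ 0) (h1 : lam ≠ 1) (hx : a < x) :
    HasDerivAt (powerProfile lam K a c) (K * (x - a) ^ (1 / (lam - 1))) x := by
  have hexp : lam / (lam - 1) - 1 = 1 / (lam - 1) := by field_simp; ring
  refine ((((hasDerivAt_id x).sub_const a).rpow_const (p := lam / (lam - 1))
    (Or.inl (sub_pos.2 hx).ne')).const_mul ((lam - 1) / lam * K)).add_const c
    |>.congr_deriv ?_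
  rw [hexp, id]; field_simp

theorem deriv_eq (h0 : lam ≠ 0) (h1 : lam ≠ 1) (hx : a < x) :
    deriv (powerProfile lam K a c) x = K * (x - a) ^ (1 / (lam - 1)) :=
  (hasDerivAt h0 h1 hx).deriv

theorem deriv_deriv_eq (h0 : lam ≠ 0) (h1 : lam ≠ 1) (hx : a < x) :
    deriv (deriv (powerProfile lam K a c)) x =
      K / (lam - 1) * (x - a) ^ (1 / (lam - 1) - 1) := by
  have hloc : deriv (powerProfile lam K a c) =ᶠ[𝓝 x] fun y ↦ K * (y - a) ^ (1 / (lam - 1)) :=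
    eventually_of_mem (Ioi_mem_nhds hx) fun y hy ↦ deriv_eq h0 h1 hy
  rw [hloc.deriv_eq]
  refine ((((hasDerivAt_id x).sub_const a).rpow_const (p := 1 / (lam - 1))
    (Or.inl (sub_pos.2 hx).ne')).const_mul K).deriv.trans ?_
  rw [id]; ring

theorem deriv_pos (h0 : lam ≠ 0) (h1 : lam ≠ 1) (hK : 0 < K) (hx : a < x) :
    0 < deriv (powerProfile lam K a c) x := by
  rw [deriv_eq h0 h1 hx]; exact mul_pos hK (rpow_pos_of_pos (sub_pos.2 hx) _)

theorem deriv_deriv_neg (h0 : lam ≠ 0) (h1 : lam < 1) (hK : 0 < K) (hx : a < x) :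
    deriv (deriv (powerProfile lam K a c)) x < 0 := by
  rw [deriv_deriv_eq h0 h1.ne hx]
  exact mul_neg_of_neg_of_pos (div_neg_of_pos_of_neg hK (by linarith))
    (rpow_pos_of_pos (sub_pos.2 hx) _)

theorem tendsto_deriv_atTop (h0 : lam ≠ 0) (h1 : lam < 1) (hK : 0 < K) :
    Tendsto (deriv (powerProfile lam K a c)) (𝓝[>] a) atTop := by
  have hshift : Tendsto (· - a) (𝓝[>] a) (𝓝[>] 0) :=
    tendsto_nhdsWithin_of_tendsto_nhds_of_eventually_within _
      (((continuous_sub_right a).tendsto' a 0 (sub_self a)).mono_left nhdsWithin_le_nhds)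
      (eventually_nhdsWithin_of_forall fun y hy ↦ mem_Ioi.2 (sub_pos.2 hy))
  refine (((tendsto_rpow_neg_nhdsGT_zero (y := 1 / (lam - 1))
    (div_neg_of_pos_of_neg one_pos (by linarith))).comp hshift).const_mul_atTop hK).congr' ?_
  filter_upwards [self_mem_nhdsWithin] with y hy
  exact (deriv_eq h0 h1.ne hy).symm

theorem deriv_eq_of_mul_eq_rpow {C y : ℝ} (h0 : lam ≠ 0) (h1 : lam ≠ 1) (hC : 0 < C)
    (hy : 0 < y) (hx : a < x) (hCx : C * (x - a) = y ^ (lam - 1)) :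
    deriv (powerProfile lam (C ^ (1 / (lam - 1))) a c) x = y := by
  rw [deriv_eq h0 h1 hx, ← mul_rpow hC.le (sub_pos.2 hx).le, hCx, one_div,
    rpow_rpow_inv hy.le (sub_ne_zero.2 h1)]

theorem ode_eq {κ R δ : ℝ} (h0 : lam ≠ 0) (h1 : lam ≠ 1) (hx : a < x)
    (hquad : κ * lam ^ 2 - (κ + R - δ) * lam - δ = 0) :
    κ * deriv (powerProfile lam K a c) x ^ 2 / deriv (deriv (powerProfile lam K a c)) x
      - R * (x - a) * deriv (powerProfile lam K a c) x + δ * powerProfile lam K a c x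
      = δ * c := by
  have hw : x - a ≠ 0 := (sub_pos.2 hx).ne'
  have hpow : (x - a) ^ (lam / (lam - 1)) = (x - a) ^ (1 / (lam - 1)) * (x - a) := by
    rw [← rpow_add_one hw]; congr 1; field_simp; ring
  have ht : (x - a) ^ (1 / (lam - 1)) ≠ 0 := (rpow_pos_of_pos (sub_pos.2 hx) _).ne'
  rw [deriv_eq h0 h1 hx, deriv_deriv_eq h0 h1 hx, powerProfile, hpow, rpow_sub_one hw]
  rcases eq_or_ne K 0 with rfl | hK
  · simp
  field_simp
  linear_combination K * (x - a) * (x - a) ^ (1 / (lam - 1)) * hquad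

end powerProfile

theorem value_function_properties_below_threshold_general
    (r μ σ ρ α δ γ κ xl lam η1 η2 : ℝ)
    (hr : 0 < r) (hμ : r < μ) (hσ : 0 < σ) (hρ : 0 < ρ)
    (hα0 : 0 < α) (hα1 : α ≤ 1) (hδ : 0 < δ)
    (hκ : κ = (μ - r) ^ 2 / (2 * σ ^ 2))
    (hxl : xl = α / (r + ρ * (1 - α)))
    (hlam : lam = (1 / (2 * κ)) *
      ((κ + r + ρ * (1 - α) - δ) -
        Real.sqrt ((κ + r + ρ * (1 - α) - δ) ^ 2 + 4 * δ * κ)))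
    (hη1 : η1 = lam * α ^ (-γ) / ((lam - 1) * (1 + ρ * xl)))
    (hη2 : η2 = α ^ (-γ) / (1 + ρ * xl))
    (ys xs : ℝ) (hys1 : η1 < ys) (hys2 : ys < η2)
    (hxs : xs = α ^ (-γ) / (ρ * ys) - 1 / ρ)
    (v : ℝ → ℝ)
    (hv : ∀ x, v x = ((lam - 1) / lam) *
        (ρ * ys ^ lam / (α ^ (-γ) - ys * (1 + ρ * xl))) ^ (1 / (lam - 1)) *
        (x - xl) ^ (lam / (lam - 1)) + α ^ (1 - γ) / (δ * (1 - γ))) :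
    xl < xs ∧
    (∀ x ∈ Set.Ioo xl xs, 0 < deriv v x ∧ deriv (deriv v) x < 0) ∧
    Tendsto (deriv v) (𝓝[>] xl) atTop ∧
    (deriv v xs = ys ∧ (1 + ρ * xs) * deriv v xs = α ^ (-γ)) ∧
    (∀ x ∈ Set.Ioo xl xs,
      κ * (deriv v x) ^ 2 / deriv (deriv v) x - α * (x / xl - 1) * deriv v x
        + δ * v x = α ^ (1 - γ) / (1 - γ)) := by
  have hκ0 : 0 < κ := hκ ▸ div_pos (pow_pos (sub_pos.2 hμ) 2) (by positivity)
  have hR : 0 < r + ρ * (1 - α) := by nlinarith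
  obtain ⟨hlam0, hquad⟩ := quadratic_neg_root_spec hκ0 hδ hlam
  have hxl0 : 0 < xl := hxl ▸ div_pos hα0 hR
  have hlam1 : lam < 1 := by linarith
  have hM : 0 < α ^ (-γ) := rpow_pos_of_pos hα0 _
  have hys : 0 < ys := hys1.trans' <| hη1 ▸ div_pos_of_neg_of_neg
    (mul_neg_of_neg_of_pos hlam0 hM) (mul_neg_of_neg_of_pos (by linarith) (by positivity))
  have hgap : 0 < α ^ (-γ) - ys * (1 + ρ * xl) := by
    rw [hη2, lt_div_iff₀ (by positivity)] at hys2; linarith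
  have hxs_sub : xs - xl = (α ^ (-γ) - ys * (1 + ρ * xl)) / (ρ * ys) := by
    rw [hxs]; field_simp; ring
  have hxs_gt : xl < xs := sub_pos.1 (hxs_sub ▸ div_pos hgap (mul_pos hρ hys))
  set C := ρ * ys ^ lam / (α ^ (-γ) - ys * (1 + ρ * xl)) with hC_def
  set c := α ^ (1 - γ) / (δ * (1 - γ))
  have hC : 0 < C := div_pos (mul_pos hρ (rpow_pos_of_pos hys _)) hgap
  have hK : 0 < C ^ (1 / (lam - 1)) := rpow_pos_of_pos hC _
  obtain rfl : v = powerProfile lam (C ^ (1 / (lam - 1))) xl c := funext hv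
  have hv'xs : deriv (powerProfile lam (C ^ (1 / (lam - 1))) xl c) xs = ys :=
    powerProfile.deriv_eq_of_mul_eq_rpow hlam0.ne hlam1.ne hC hys hxs_gt
      (by rw [hxs_sub, hC_def, rpow_sub_one hys.ne']; field_simp)
  refine ⟨hxs_gt, fun x hx ↦ ⟨powerProfile.deriv_pos hlam0.ne hlam1.ne hK hx.1,
    powerProfile.deriv_deriv_neg hlam0.ne hlam1 hK hx.1⟩,
    powerProfile.tendsto_deriv_atTop hlam0.ne hlam1 hK,
    ⟨hv'xs, by rw [hv'xs, hxs]; field_simp; ring⟩, fun x hx ↦ ?_⟩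
  have hdrift : α * (x / xl - 1) = (r + ρ * (1 - α)) * (x - xl) := by
    rw [hxl]; field_simp
  rw [hdrift, powerProfile.ode_eq hlam0.ne hlam1.ne hx.1 (by linear_combination hquad)]
  exact (mul_div_assoc' ..).trans (mul_div_mul_left _ _ hδ.ne')

/-- Properties of the explicit value function `v` on `(x̲, x*]`: `x* > x̲`;
`v' > 0` and `v'' < 0` on `(x̲, x*)`; `v'(x̲⁺) = +∞`; `v'(x*) = y*`, hence
`(1 + ρ x*) v'(x*) = α^(-γ)`; and `v` solves the HJB free-boundary equation
`κ v'²/v'' - α (x/x̲ - 1) v' + δ v = α^(1-γ)/(1-γ)` on `(x̲, x*)`. -/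
theorem value_function_properties_below_threshold
    (r μ σ ρ α δ γ κ xl lam η1 η2 : ℝ)
    (hr : 0 < r) (hμ : r < μ) (hσ : 0 < σ) (hρ : 0 < ρ)
    (hα0 : 0 < α) (hα1 : α ≤ 1) (hδ : 0 < δ) (hγ : 1 < γ)
    (hκ : κ = (μ - r) ^ 2 / (2 * σ ^ 2))
    (hxl : xl = α / (r + ρ * (1 - α)))
    (hlam : lam = (1 / (2 * κ)) *
      ((κ + r + ρ * (1 - α) - δ) -
        Real.sqrt ((κ + r + ρ * (1 - α) - δ) ^ 2 + 4 * δ * κ)))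
    (hη1 : η1 = lam * α ^ (-γ) / ((lam - 1) * (1 + ρ * xl)))
    (hη2 : η2 = α ^ (-γ) / (1 + ρ * xl))
    (ys xs : ℝ) (hys1 : η1 < ys) (hys2 : ys < η2)
    (hxs : xs = α ^ (-γ) / (ρ * ys) - 1 / ρ)
    (v : ℝ → ℝ)
    (hv : ∀ x, v x = ((lam - 1) / lam) *
        (ρ * ys ^ lam / (α ^ (-γ) - ys * (1 + ρ * xl))) ^ (1 / (lam - 1)) *
        (x - xl) ^ (lam / (lam - 1)) + α ^ (1 - γ) / (δ * (1 - γ))) :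
    xl < xs ∧
    (∀ x ∈ Set.Ioo xl xs, 0 < deriv v x ∧ deriv (deriv v) x < 0) ∧
    Tendsto (deriv v) (𝓝[>] xl) atTop ∧
    (deriv v xs = ys ∧ (1 + ρ * xs) * deriv v xs = α ^ (-γ)) ∧
    (∀ x ∈ Set.Ioo xl xs,
      κ * (deriv v x) ^ 2 / deriv (deriv v) x - α * (x / xl - 1) * deriv v x
        + δ * v x = α ^ (1 - γ) / (1 - γ)) :=
  value_function_properties_below_threshold_general r μ σ ρ α δ γ κ xl lam η1 η2 hr hμ hσ hρ hα0 hα1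
    hδ hκ hxl hlam hη1 hη2 ys xs hys1 hys2 hxs v hv
end

section
/- Let η ∈ (η₁, η₂) and let (φ, H) satisfy the habit free-boundary ODE system on (ε, η] for some ε ∈ [0, η), with values in D := {(φ,H) : φ > 0, 0 < H < κ/ρ} on (ε, η), and with boundary conditions φ(η) = α^{−γ} and H(η) = (κ/ρ)·[1 − λ·(1 − η/η₁)]. Then H(y) ≤ (κ/ρ)·[1 − λ·(1 − y/η₁)] for all y ∈ (max(ε, η₁), η]. -/
open Real Set Filter Topology

/-!
Since `H < κ/ρ`, the first equation makes `φ` increasing, so `φ ≤ α^(-γ)` and `φ^(-1/γ) ≥ α`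
to the left of `η`. With these bounds the second equation forces `H' > F'` wherever `H ≥ F` on
`(η₁, η)`, for the affine function `F(y) = (κ/ρ)(1 - λ(1 - y/η₁))`: the slack is controlled by
the quadratic `κλ² = (κ + r + ρ(1-α) - δ)λ + δ` solved by `λ` and by the identity
`(r + ρ)η₁ = α^(-γ)(δ + κλ)`. Since `H(η) = F(η)`, `H - F` cannot be positive left of `η`.
-/

theorem smallerRoot_neg {κ A δ : ℝ} (hκ : 0 < κ) (hδ : 0 < δ) :
    1 / (2 * κ) * (A - √(A ^ 2 + 4 * δ * κ)) < 0 := by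
  have hA : A < √(A ^ 2 + 4 * δ * κ) :=
    calc A ≤ |A| := le_abs_self A
      _ = √(A ^ 2) := (sqrt_sq_eq_abs A).symm
      _ < √(A ^ 2 + 4 * δ * κ) := sqrt_lt_sqrt (sq_nonneg A) (by linarith [mul_pos hδ hκ])
  exact mul_neg_of_pos_of_neg (by positivity) (by linarith)

theorem smallerRoot_isRoot {κ A δ : ℝ} (hκ : 0 < κ) (hδ : 0 ≤ δ) :
    κ * (1 / (2 * κ) * (A - √(A ^ 2 + 4 * δ * κ))) ^ 2
      = A * (1 / (2 * κ) * (A - √(A ^ 2 + 4 * δ * κ))) + δ := by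
  set s := √(A ^ 2 + 4 * δ * κ)
  have hs : s ^ 2 = A ^ 2 + 4 * δ * κ := sq_sqrt (by positivity)
  field_simp
  linear_combination hs

theorem mul_eta1_eq {r ρ α δ κ lam m xl η1 : ℝ} (hq : r + ρ * (1 - α) ≠ 0) (hrρ : r + ρ ≠ 0)
    (hlam : lam ≠ 1) (hxl : xl = α / (r + ρ * (1 - α)))
    (hη1 : η1 = lam * m / ((lam - 1) * (1 + ρ * xl)))
    (hquad : κ * lam ^ 2 = (κ + r + ρ * (1 - α) - δ) * lam + δ) :
    (r + ρ) * η1 = m * (δ + κ * lam) := by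
  have h1 : lam - 1 ≠ 0 := sub_ne_zero.mpr hlam
  have hx : 1 + ρ * xl = (r + ρ) / (r + ρ * (1 - α)) := by
    rw [hxl]; field_simp; ring
  rw [hη1, hx]
  field_simp
  linear_combination -m * hquad

theorem eta1_pos {r ρ α lam m xl η1 : ℝ} (hρ : 0 < ρ) (hα : 0 < α) (hq : 0 < r + ρ * (1 - α))
    (hm : 0 < m) (hlam : lam < 0) (hxl : xl = α / (r + ρ * (1 - α)))
    (hη1 : η1 = lam * m / ((lam - 1) * (1 + ρ * xl))) : 0 < η1 := by
  rw [hη1, hxl]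
  exact div_pos_of_neg_of_neg (mul_neg_of_neg_of_pos hlam hm)
    (mul_neg_of_neg_of_pos (by linarith) (by positivity))

theorem le_rpow_neg_inv_of_le_rpow_neg {α γ p : ℝ} (hα : 0 < α) (hγ : 0 < γ) (hp : 0 < p)
    (h : p ≤ α ^ (-γ)) : α ≤ p ^ (-1 / γ) :=
  calc α = (α ^ (-γ)) ^ (-1 / γ) := by
        rw [← rpow_mul hα.le, show -γ * (-1 / γ) = 1 by field_simp, rpow_one]
    _ ≤ p ^ (-1 / γ) :=
        rpow_le_rpow_of_nonpos hp h (div_nonpos_of_nonpos_of_nonneg (by norm_num) hγ.le)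

theorem nonpos_left_of_deriv_pos_of_pos {G G' : ℝ → ℝ} {a b : ℝ} (hab : a ≤ b)
    (hG : ContinuousOn G (Icc a b)) (hG' : ∀ x ∈ Ioo a b, HasDerivAt G (G' x) x)
    (hb : G b ≤ 0) (hpos : ∀ x ∈ Ioo a b, 0 < G x → 0 < G' x) : G a ≤ 0 := by
  by_contra! ha
  have hclosed : IsClosed (Icc a b ∩ G ⁻¹' Iic 0) :=
    hG.preimage_isClosed_of_isClosed isClosed_Icc isClosed_Iic
  obtain ⟨a₁, ⟨ha₁, hGa₁⟩, hleast⟩ :=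
    (isCompact_Icc.of_isClosed_subset hclosed inter_subset_left).exists_isLeast
      ⟨b, ⟨hab, le_rfl⟩, hb⟩
  have haa₁ : a < a₁ := lt_of_le_of_ne ha₁.1 (by rintro rfl; exact hGa₁.not_gt ha)
  have hGpos : ∀ x ∈ Ico a a₁, 0 < G x := fun x hx ↦ by
    by_contra! hx0
    exact hx.2.not_ge (hleast ⟨⟨hx.1, hx.2.le.trans ha₁.2⟩, hx0⟩)
  obtain ⟨c, hc, hslope⟩ := exists_hasDerivAt_eq_slope G G' haa₁
    (hG.mono (Icc_subset_Icc le_rfl ha₁.2)) fun x hx ↦ hG' x ⟨hx.1, hx.2.trans_le ha₁.2⟩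
  have hG'c := hpos c ⟨hc.1, hc.2.trans_le ha₁.2⟩ (hGpos c ⟨hc.1.le, hc.2⟩)
  have : (G a₁ - G a) / (a₁ - a) < 0 :=
    div_neg_of_neg_of_pos (by linarith [show G a₁ ≤ 0 from hGa₁]) (sub_pos.mpr haa₁)
  linarith

theorem monotoneOn_Icc_of_hasDerivAt_nonneg {f f' : ℝ → ℝ} {a b : ℝ}
    (hf : ContinuousOn f (Icc a b)) (hf' : ∀ x ∈ Ioo a b, HasDerivAt f (f' x) x)
    (hpos : ∀ x ∈ Ioo a b, 0 ≤ f' x) : MonotoneOn f (Icc a b) :=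
  monotoneOn_of_hasDerivWithinAt_nonneg (convex_Icc a b) hf
    (fun x hx ↦ (hf' x (by rwa [interior_Icc] at hx)).hasDerivWithinAt)
    fun x hx ↦ hpos x (by rwa [interior_Icc] at hx)

theorem affine_slope_lt_habitDrift {r ρ δ κ lam η1 m a p u c h : ℝ}
    (hρ : 0 < ρ) (hrρ : 0 ≤ r + ρ) (hδ : 0 < δ) (hκ : 0 < κ) (hlam : lam < 0)
    (hη1 : 0 < η1) (hc : η1 < c) (hp : 0 < p) (hpm : p ≤ m) (hu : a ≤ u) (hh : h < κ / ρ)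
    (hF : κ / ρ * (1 - lam * (1 - c / η1)) ≤ h)
    (hid : (r + ρ) * η1 = m * (δ + κ * lam))
    (hquad : κ * lam ^ 2 = (κ + r + ρ * (1 - a) - δ) * lam + δ) :
    κ * lam / (ρ * η1) < ρ / (κ * c) * (κ / ρ - h) * (u - h - (r + ρ - δ) / ρ)
      + (r + ρ) / (ρ * p) - δ / (ρ * c) := by
  have hc0 : 0 < c := hη1.trans hc
  have hm : 0 < m := hp.trans_le hpm
  set W := κ / ρ - h with hWdef
  set W₀ := κ / ρ * lam * (1 - c / η1) with hW₀def
  set b := ρ * u - κ - r - ρ + δ with hbdef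
  have hW : 0 < W := sub_pos.2 hh
  have hWW₀ : W ≤ W₀ := by linarith
  have hW₀ : 0 < W₀ := mul_pos_of_neg_of_neg (mul_neg_of_pos_of_neg (by positivity) hlam)
    (by rw [sub_neg, one_lt_div hη1]; exact hc)
  have hdrift : ρ / (κ * c) * W * (u - h - (r + ρ - δ) / ρ) = W * (b + ρ * W) / (κ * c) := by
    rw [hWdef, hbdef]; field_simp; ring
  have hcons : (δ + κ * lam) / (ρ * η1) ≤ (r + ρ) / (ρ * p) :=
    calc (δ + κ * lam) / (ρ * η1) = (r + ρ) / (ρ * m) := by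
          rw [div_eq_div_iff (by positivity) (by positivity)]; linear_combination -ρ * hid
      _ ≤ (r + ρ) / (ρ * p) := div_le_div_of_nonneg_left hrρ (by positivity) (by gcongr)
  have hsplit : (δ + κ * lam) / (ρ * η1) = δ / (ρ * η1) + κ * lam / (ρ * η1) := add_div _ _ _
  -- `W₀ = κ/ρ - F(c)`. For `b < 0` the worst case is `W = W₀`, `u = a`, where the quadratic
  -- for `lam` leaves exactly `(c - η1) κ lam² / (ρ η1 c)`.
  rcases le_or_gt 0 b with hb | hb
  · have hfirst : 0 ≤ W * (b + ρ * W) / (κ * c) := by positivity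
    have hdisc : δ / (ρ * c) < δ / (ρ * η1) := by gcongr
    linarith
  · have hfirst : W₀ * (ρ * a - κ - r - ρ + δ) / (κ * c) ≤ W * (b + ρ * W) / (κ * c) := by
      refine div_le_div_of_nonneg_right ?_ (by positivity)
      have h₁ : W₀ * b ≤ W * b := mul_le_mul_of_nonpos_right hWW₀ hb.le
      have h₂ : W₀ * (ρ * a - κ - r - ρ + δ) ≤ W₀ * b := by
        gcongr
        linarith [mul_le_mul_of_nonneg_left hu hρ.le]
      linarith [mul_pos hW (mul_pos hρ hW)]
    have hrest : W₀ * (ρ * a - κ - r - ρ + δ) / (κ * c) + δ / (ρ * η1) - δ / (ρ * c)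
        = (c - η1) * (κ * lam ^ 2) / (ρ * η1 * c) := by
      rw [hW₀def]
      field_simp
      linear_combination -(c - η1) * hquad
    have hpos : 0 < (c - η1) * (κ * lam ^ 2) / (ρ * η1 * c) :=
      div_pos (mul_pos (sub_pos.2 hc) (by have := hlam.ne; positivity)) (by positivity)
    linarith

theorem hasDerivAt_affineComparison (κ ρ lam η1 y : ℝ) :
    HasDerivAt (fun z ↦ κ / ρ * (1 - lam * (1 - z / η1))) (κ * lam / (ρ * η1)) y := by
  refine (((hasDerivAt_id' y).div_const η1).const_sub 1 |>.const_mul lam |>.const_sub 1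
    |>.const_mul (κ / ρ)).congr_deriv ?_
  ring

theorem H_le_affine_comparison_general
    (r μ σ ρ α δ γ κ xl lam η1 : ℝ)
    (hr : 0 < r) (hμ : r < μ) (hσ : 0 < σ) (hρ : 0 < ρ)
    (hα0 : 0 < α) (hα1 : α ≤ 1) (hδ : 0 < δ) (hγ : 1 < γ)
    (hκ : κ = (μ - r) ^ 2 / (2 * σ ^ 2))
    (hxl : xl = α / (r + ρ * (1 - α)))
    (hlam : lam = (1 / (2 * κ)) *
      ((κ + r + ρ * (1 - α) - δ) -
        Real.sqrt ((κ + r + ρ * (1 - α) - δ) ^ 2 + 4 * δ * κ)))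
    (hη1 : η1 = lam * α ^ (-γ) / ((lam - 1) * (1 + ρ * xl)))
    (η ε : ℝ)
    (φ H : ℝ → ℝ)
    (hcont : ContinuousOn φ (Set.Ioc ε η) ∧ ContinuousOn H (Set.Ioc ε η))
    (hD : ∀ y ∈ Set.Ioo ε η, 0 < φ y ∧ 0 < H y ∧ H y < κ / ρ)
    (hsys : ∀ y ∈ Set.Ioo ε η,
      HasDerivAt φ ((ρ / (κ * y)) * (κ / ρ - H y) * φ y) y ∧
      HasDerivAt H ((ρ / (κ * y)) * (κ / ρ - H y) *
          ((φ y) ^ (-1 / γ) - H y - (r + ρ - δ) / ρ)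
        + (r + ρ) / (ρ * φ y) - δ / (ρ * y)) y)
    (hbcφ : φ η = α ^ (-γ))
    (hbcH : H η = (κ / ρ) * (1 - lam * (1 - η / η1))) :
    ∀ y ∈ Set.Ioc (max ε η1) η, H y ≤ (κ / ρ) * (1 - lam * (1 - y / η1)) := by
  intro y ⟨hy, hyη⟩
  obtain ⟨hεy, hη1y⟩ := max_lt_iff.mp hy
  have hsub : Icc y η ⊆ Ioc ε η := fun z hz ↦ ⟨hεy.trans_le hz.1, hz.2⟩
  have hIoo : Ioo y η ⊆ Ioo ε η := Ioo_subset_Ioo_left hεy.le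
  have hκ0 : 0 < κ := hκ ▸ div_pos (pow_pos (sub_pos.2 hμ) 2) (by positivity)
  have hq : 0 < r + ρ * (1 - α) := by nlinarith
  have hlam0 : lam < 0 := hlam ▸ smallerRoot_neg hκ0 hδ
  have hquad : κ * lam ^ 2 = (κ + r + ρ * (1 - α) - δ) * lam + δ :=
    hlam ▸ smallerRoot_isRoot hκ0 hδ.le
  have hid := mul_eta1_eq hq.ne' (by positivity) (by linarith) hxl hη1 hquad
  have hη1pos := eta1_pos hρ hα0 hq (rpow_pos_of_pos hα0 _) hlam0 hxl hη1
  have hφmono : MonotoneOn φ (Icc y η) :=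
    monotoneOn_Icc_of_hasDerivAt_nonneg (hcont.1.mono hsub) (fun x hx ↦ (hsys x (hIoo hx)).1)
      fun x hx ↦ by
        obtain ⟨hφx, -, hHx⟩ := hD x (hIoo hx)
        have := sub_pos.2 hHx
        have := hη1pos.trans (hη1y.trans hx.1)
        positivity
  have hG := nonpos_left_of_deriv_pos_of_pos (G := fun z ↦ H z - κ / ρ * (1 - lam * (1 - z / η1)))
    hyη ((hcont.2.mono hsub).sub (by fun_prop))
    (fun x hx ↦ (hsys x (hIoo hx)).2.sub (hasDerivAt_affineComparison κ ρ lam η1 x))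
    (by simp [hbcH]) fun x hx hGx ↦ by
      obtain ⟨hφx, -, hHx⟩ := hD x (hIoo hx)
      have hφle : φ x ≤ α ^ (-γ) := hbcφ ▸ hφmono ⟨hx.1.le, hx.2.le⟩ ⟨hyη, le_rfl⟩ hx.2.le
      exact sub_pos.2 <| affine_slope_lt_habitDrift hρ (by positivity) hδ hκ0 hlam0 hη1pos
        (hη1y.trans hx.1) hφx hφle (le_rpow_neg_inv_of_le_rpow_neg hα0 (by linarith) hφx hφle)
        hHx (by linarith) hid hquad
  linarith

/-- Upper bound on `H` by the affine comparison function: if `(φ, H)` solves the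
habit free-boundary ODE system on `(ε, η]` with values in
`D = {(φ,H) : φ > 0, 0 < H < κ/ρ}` and boundary conditions `φ(η) = α^(-γ)`,
`H(η) = (κ/ρ)(1 - λ(1 - η/η₁))`, then
`H(y) ≤ (κ/ρ)(1 - λ(1 - y/η₁))` for all `y ∈ (max ε η₁, η]`. -/
theorem H_le_affine_comparison
    (r μ σ ρ α δ γ κ xl lam η1 η2 : ℝ)
    (hr : 0 < r) (hμ : r < μ) (hσ : 0 < σ) (hρ : 0 < ρ)
    (hα0 : 0 < α) (hα1 : α ≤ 1) (hδ : 0 < δ) (hγ : 1 < γ)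
    (hκ : κ = (μ - r) ^ 2 / (2 * σ ^ 2))
    (hxl : xl = α / (r + ρ * (1 - α)))
    (hlam : lam = (1 / (2 * κ)) *
      ((κ + r + ρ * (1 - α) - δ) -
        Real.sqrt ((κ + r + ρ * (1 - α) - δ) ^ 2 + 4 * δ * κ)))
    (hη1 : η1 = lam * α ^ (-γ) / ((lam - 1) * (1 + ρ * xl)))
    (hη2 : η2 = α ^ (-γ) / (1 + ρ * xl))
    (η ε : ℝ) (hηa : η1 < η) (hηb : η < η2) (hε0 : 0 ≤ ε) (hεη : ε < η)
    (φ H : ℝ → ℝ)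
    (hcont : ContinuousOn φ (Set.Ioc ε η) ∧ ContinuousOn H (Set.Ioc ε η))
    (hD : ∀ y ∈ Set.Ioo ε η, 0 < φ y ∧ 0 < H y ∧ H y < κ / ρ)
    (hsys : ∀ y ∈ Set.Ioo ε η,
      HasDerivAt φ ((ρ / (κ * y)) * (κ / ρ - H y) * φ y) y ∧
      HasDerivAt H ((ρ / (κ * y)) * (κ / ρ - H y) *
          ((φ y) ^ (-1 / γ) - H y - (r + ρ - δ) / ρ)
        + (r + ρ) / (ρ * φ y) - δ / (ρ * y)) y)
    (hbcφ : φ η = α ^ (-γ))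
    (hbcH : H η = (κ / ρ) * (1 - lam * (1 - η / η1))) :
    ∀ y ∈ Set.Ioc (max ε η1) η, H y ≤ (κ / ρ) * (1 - lam * (1 - y / η1)) :=
  H_le_affine_comparison_general r μ σ ρ α δ γ κ xl lam η1 hr hμ hσ hρ hα0 hα1 hδ hγ hκ hxl hlam hη1
    η ε φ H hcont hD hsys hbcφ hbcH
end

section
/- Let c > 0 and let φ, H : (0,c) → ℝ with φ differentiable and positive, satisfying φ'(y) = (ρ/(κy))·(κ/ρ − H(y))·φ(y) for all y ∈ (0,c). Assume lim_{y→0⁺} H(y) = κ/ρ and that the limit lim_{y→0⁺} φ(y) exists in [0, ∞). Then for every β > 0, lim_{y→0⁺} φ(y)/y^{β} = +∞. -/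
/-!
Writing `a(y) := (ρ/κ)(κ/ρ - H(y))`, the equation reads `y φ'(y) = a(y) φ(y)` with `a(y) → 0`.
Hence for any `ε > 0` the function `φ(y) y^{-ε}` has derivative `φ(y) y^{-ε-1} (a(y) - ε) < 0`
near `0`, so it is decreasing there and `φ(y) ≥ m y^ε` for some `m > 0`. Taking `ε = β/2` gives
`φ(y)/y^β ≥ m y^{-β/2} → ∞`.
-/

open Real Set Filter Topology

section LogDerivative

variable {f a : ℝ → ℝ} {c ε : ℝ}

theorem strictAntiOn_mul_rpow_neg_of_hasDerivAt
    (hf_pos : ∀ y ∈ Ioo 0 c, 0 < f y)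
    (hf' : ∀ y ∈ Ioo 0 c, HasDerivAt f (a y / y * f y) y)
    (ha : ∀ y ∈ Ioo 0 c, a y < ε) :
    StrictAntiOn (fun y => f y * y ^ (-ε)) (Ioo 0 c) := by
  have hderiv : ∀ y ∈ Ioo 0 c,
      HasDerivAt (fun y => f y * y ^ (-ε)) (f y * y ^ (-ε - 1) * (a y - ε)) y := by
    intro y hy
    refine ((hf' y hy).mul (hasDerivAt_rpow_const (p := -ε) (Or.inl hy.1.ne'))).congr_deriv ?_
    rw [rpow_sub_one hy.1.ne']
    field_simp
    ring
  refine strictAntiOn_of_deriv_neg (convex_Ioo 0 c)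
    (fun y hy => (hderiv y hy).continuousAt.continuousWithinAt) ?_
  rw [interior_Ioo]
  intro y hy
  rw [(hderiv y hy).deriv]
  exact mul_neg_of_pos_of_neg (mul_pos (hf_pos y hy) (rpow_pos_of_pos hy.1 _))
    (sub_neg.2 (ha y hy))

theorem exists_pos_mul_rpow_le_of_hasDerivAt (hc : 0 < c)
    (hf_pos : ∀ y ∈ Ioo 0 c, 0 < f y)
    (hf' : ∀ y ∈ Ioo 0 c, HasDerivAt f (a y / y * f y) y)
    (ha : Tendsto a (𝓝[>] 0) (𝓝 0)) (hε : 0 < ε) :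
    ∃ m > 0, ∀ᶠ y in 𝓝[>] 0, m * y ^ ε ≤ f y := by
  obtain ⟨d, hd, hd_small⟩ :=
    mem_nhdsGT_iff_exists_Ioo_subset.1 (ha.eventually (gt_mem_nhds hε))
  set e := min c d
  have he : 0 < e := lt_min hc hd
  have hsub : Ioo 0 e ⊆ Ioo 0 c := Ioo_subset_Ioo_right (min_le_left c d)
  have hanti : StrictAntiOn (fun y => f y * y ^ (-ε)) (Ioo 0 e) :=
    strictAntiOn_mul_rpow_neg_of_hasDerivAt (fun y hy => hf_pos y (hsub hy))
      (fun y hy => hf' y (hsub hy))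
      (fun y hy => hd_small (Ioo_subset_Ioo_right (min_le_right c d) hy))
  have hmid : e / 2 ∈ Ioo 0 e := ⟨half_pos he, half_lt_self he⟩
  have hm : 0 < f (e / 2) * (e / 2) ^ (-ε) :=
    mul_pos (hf_pos _ (hsub hmid)) (rpow_pos_of_pos hmid.1 _)
  refine ⟨_, hm, ?_⟩
  filter_upwards [Ioo_mem_nhdsGT hmid.1] with y hy
  have hlt : f (e / 2) * (e / 2) ^ (-ε) < f y * y ^ (-ε) :=
    hanti ⟨hy.1, hy.2.trans hmid.2⟩ hmid hy.2
  rw [rpow_neg hy.1.le, ← div_eq_mul_inv, lt_div_iff₀ (rpow_pos_of_pos hy.1 ε)] at hlt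
  exact hlt.le

theorem tendsto_div_rpow_nhdsGT_zero_atTop_of_hasDerivAt (hc : 0 < c)
    (hf_pos : ∀ y ∈ Ioo 0 c, 0 < f y)
    (hf' : ∀ y ∈ Ioo 0 c, HasDerivAt f (a y / y * f y) y)
    (ha : Tendsto a (𝓝[>] 0) (𝓝 0)) {β : ℝ} (hβ : 0 < β) :
    Tendsto (fun y => f y / y ^ β) (𝓝[>] 0) atTop := by
  obtain ⟨m, hm, hle⟩ := exists_pos_mul_rpow_le_of_hasDerivAt hc hf_pos hf' ha (half_pos hβ)
  refine tendsto_atTop_mono' _ ?_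
    ((tendsto_rpow_neg_nhdsGT_zero (by linarith : β / 2 - β < 0)).const_mul_atTop hm)
  filter_upwards [hle, self_mem_nhdsWithin] with y hy (hy0 : 0 < y)
  rw [rpow_sub hy0, ← mul_div_assoc]
  gcongr

end LogDerivative

theorem phi_over_y_beta_tendsto_atTop_general
    (r μ σ ρ κ : ℝ)
    (hμ : r < μ) (hσ : 0 < σ) (hρ : 0 < ρ)
    (hκ : κ = (μ - r) ^ 2 / (2 * σ ^ 2))
    (c : ℝ) (hc : 0 < c)
    (φ H : ℝ → ℝ)
    (hφpos : ∀ y ∈ Set.Ioo (0:ℝ) c, 0 < φ y)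
    (hφ' : ∀ y ∈ Set.Ioo (0:ℝ) c,
      HasDerivAt φ ((ρ / (κ * y)) * (κ / ρ - H y) * φ y) y)
    (hHlim : Tendsto H (𝓝[>] (0:ℝ)) (𝓝 (κ / ρ))) :
    ∀ β : ℝ, 0 < β →
      Tendsto (fun y => φ y / y ^ β) (𝓝[>] (0:ℝ)) atTop := by
  have hκ0 : κ ≠ 0 := by
    rw [hκ]
    exact div_ne_zero (pow_ne_zero 2 (sub_ne_zero.2 hμ.ne')) (by positivity)
  refine fun β hβ => tendsto_div_rpow_nhdsGT_zero_atTop_of_hasDerivAt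
    (a := fun y => ρ / κ * (κ / ρ - H y)) hc hφpos (fun y hy => ?_) ?_ hβ
  · convert hφ' y hy using 1
    field_simp
  · simpa using (hHlim.const_sub (κ / ρ)).const_mul (ρ / κ)

/-- Lemma B.3: if `φ` satisfies `φ' = (ρ/(κy))(κ/ρ - H)φ` on `(0,c)` with `φ > 0`,
`H(y) → κ/ρ` as `y → 0⁺`, and `φ` has a (finite, nonnegative) limit at `0⁺`, then
`φ(y)/y^β → +∞` as `y → 0⁺` for every `β > 0`. -/
theorem phi_over_y_beta_tendsto_atTop
    (r μ σ ρ α δ γ κ : ℝ)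
    (hr : 0 < r) (hμ : r < μ) (hσ : 0 < σ) (hρ : 0 < ρ)
    (hα0 : 0 < α) (hα1 : α ≤ 1) (hδ : 0 < δ) (hγ : 1 < γ)
    (hκ : κ = (μ - r) ^ 2 / (2 * σ ^ 2))
    (c : ℝ) (hc : 0 < c)
    (φ H : ℝ → ℝ)
    (hφpos : ∀ y ∈ Set.Ioo (0:ℝ) c, 0 < φ y)
    (hφ' : ∀ y ∈ Set.Ioo (0:ℝ) c,
      HasDerivAt φ ((ρ / (κ * y)) * (κ / ρ - H y) * φ y) y)
    (hHlim : Tendsto H (𝓝[>] (0:ℝ)) (𝓝 (κ / ρ)))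
    (l : ℝ) (hl : 0 ≤ l)
    (hφlim : Tendsto φ (𝓝[>] (0:ℝ)) (𝓝 l)) :
    ∀ β : ℝ, 0 < β →
      Tendsto (fun y => φ y / y ^ β) (𝓝[>] (0:ℝ)) atTop :=
  phi_over_y_beta_tendsto_atTop_general r μ σ ρ κ hμ hσ hρ hκ c hc φ H hφpos hφ' hHlim
end

section
/- Let x̲ < x* be real numbers and a₀, b₀ > 0, and set a(x) := a₀·(x − x̲) and b(x) := b₀·(x − x̲) for x ∈ (x̲, x*). Define the Feller test function ψ(x) := ∫_{x*}^{x} ∫_{x*}^{y} (2/a(z)²)·exp( −2·∫_{z}^{y} (b(η)/a(η)²) dη ) dz dy for x ∈ (x̲, x*). Then lim_{x→x̲⁺} ψ(x) = +∞. -/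
/-!
For `y ≤ z` the drift integral `∫_z^y b/a²` is nonpositive, so the exponential weight is at
least `1` and the inner integral is at least `∫_y^{x*} 2/a² = (2/a₀²)((y - x̲)⁻¹ - (x* - x̲)⁻¹)`.
Integrating once more gives `ψ x ≥ (2/a₀²)(log (x* - x̲) - log (x - x̲) - 1) → ∞`.
-/

open Real Set Filter Topology intervalIntegral

section ExpWeightedIntegral

variable {m k : ℝ → ℝ} {a c d y : ℝ}

lemma continuousOn_integral_mul_exp_integral (hm : ContinuousOn m (uIcc a d))
    (hk : ContinuousOn k (uIcc a d)) :
    ContinuousOn (fun y => ∫ z in y..d, m z * exp (c * ∫ t in z..y, k t)) (uIcc a d) := by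
  set P : ℝ → ℝ := fun u => ∫ t in u..d, k t
  have hP : ContinuousOn P (uIcc a d) :=
    continuousOn_primitive_interval_left hk.integrableOn_uIcc
  have hexpP : ContinuousOn (fun z => exp (c * P z)) (uIcc a d) :=
    continuous_exp.comp_continuousOn (hP.const_smul c)
  -- `∫_z^y k = P z - P y` separates the variables in the exponential
  have hsplit : EqOn (fun y => ∫ z in y..d, m z * exp (c * ∫ t in z..y, k t))
      (fun y => exp (-(c * P y)) * ∫ z in y..d, m z * exp (c * P z)) (uIcc a d) := by
    intro y hy
    dsimp only
    rw [← integral_const_mul]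
    refine integral_congr fun z hz => ?_
    have hz' : z ∈ uIcc a d := uIcc_subset_uIcc_right hy hz
    have hPz : ∫ t in z..y, k t = P z - P y := by
      rw [eq_sub_iff_add_eq]
      exact integral_add_adjacent_intervals
        ((hk.mono (uIcc_subset_uIcc hz' hy)).intervalIntegrable)
        ((hk.mono (uIcc_subset_uIcc hy right_mem_uIcc)).intervalIntegrable)
    rw [hPz, mul_sub, sub_eq_neg_add, exp_add]
    ring
  refine ContinuousOn.congr ?_ hsplit
  exact (continuous_exp.comp_continuousOn (hP.const_smul c).neg).mul
    (continuousOn_primitive_interval_left (hm.mul hexpP).integrableOn_uIcc)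

lemma integral_le_integral_mul_exp_integral (hyd : y ≤ d) (hm : ContinuousOn m (uIcc y d))
    (hk : ContinuousOn k (uIcc y d)) (hm0 : ∀ z ∈ Icc y d, 0 ≤ m z)
    (hk0 : ∀ t ∈ Icc y d, 0 ≤ k t) (hc : c ≤ 0) :
    ∫ z in y..d, m z ≤ ∫ z in y..d, m z * exp (c * ∫ t in z..y, k t) := by
  have hP : ContinuousOn (fun z => ∫ t in z..y, k t) (uIcc y d) := by
    rw [uIcc_comm] at hk ⊢
    exact continuousOn_primitive_interval_left hk.integrableOn_uIcc
  refine integral_mono_on hyd hm.intervalIntegrable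
    (hm.mul (continuous_exp.comp_continuousOn (hP.const_smul c))).intervalIntegrable
    fun z hz => ?_
  have hint : ∫ t in z..y, k t ≤ 0 := by
    rw [integral_symm]
    exact neg_nonpos.2 (integral_nonneg hz.1 fun t ht => hk0 t ⟨ht.1, ht.2.trans hz.2⟩)
  calc m z = m z * 1 := (mul_one _).symm
    _ ≤ _ := mul_le_mul_of_nonneg_left (one_le_exp (mul_nonneg_of_nonpos_of_nonpos hc hint))
        (hm0 z hz)

end ExpWeightedIntegral

section LinearCoefficients

variable {xl a0 b0 x y d : ℝ}

lemma continuousOn_two_div_mul_sub_sq (ha0 : a0 ≠ 0) :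
    ContinuousOn (fun z => 2 / (a0 * (z - xl)) ^ 2) (Ioi xl) :=
  continuousOn_const.div (by fun_prop) fun z hz =>
    pow_ne_zero _ (mul_ne_zero ha0 (sub_ne_zero.2 (ne_of_gt hz)))

lemma continuousOn_mul_sub_div_mul_sub_sq (ha0 : a0 ≠ 0) :
    ContinuousOn (fun t => b0 * (t - xl) / (a0 * (t - xl)) ^ 2) (Ioi xl) :=
  (by fun_prop : Continuous fun t => b0 * (t - xl)).continuousOn.div (by fun_prop) fun z hz =>
    pow_ne_zero _ (mul_ne_zero ha0 (sub_ne_zero.2 (ne_of_gt hz)))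

lemma integral_two_div_mul_sub_sq (hy : xl < y) (hd : xl < d) :
    ∫ z in y..d, 2 / (a0 * (z - xl)) ^ 2 = 2 / a0 ^ 2 * ((y - xl)⁻¹ - (d - xl)⁻¹) := by
  have h : ∀ z, 2 / (a0 * (z - xl)) ^ 2 = 2 / a0 ^ 2 * (z - xl) ^ (-2 : ℤ) := fun z => by
    rw [mul_pow, div_mul_eq_div_div, div_eq_mul_inv _ ((z - xl) ^ 2), zpow_neg, zpow_ofNat]
  simp_rw [h]
  rw [integral_const_mul, integral_comp_sub_right (fun u => u ^ (-2 : ℤ)),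
    integral_zpow (Or.inr ⟨by norm_num, notMem_uIcc_of_lt (by linarith) (by linarith)⟩)]
  norm_num
  exact Or.inl (by ring)

lemma integral_inv_sub_sub_inv (hx : xl < x) (hd : xl < d) :
    ∫ y in x..d, ((y - xl)⁻¹ - (d - xl)⁻¹) = log (d - xl) - log (x - xl) - (d - x) / (d - xl) := by
  have hint : IntervalIntegrable (fun y => (y - xl)⁻¹) MeasureTheory.volume x d :=
    ((continuousOn_id.sub continuousOn_const).inv₀ fun y hy => sub_ne_zero.2 (ne_of_gt
      (lt_of_lt_of_le (lt_min hx hd) hy.1))).intervalIntegrable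
  rw [integral_sub hint intervalIntegrable_const, integral_const,
    integral_comp_sub_right (fun u => u⁻¹), integral_inv_of_pos (by linarith) (by linarith),
    log_div (by linarith) (by linarith), smul_eq_mul]
  ring

lemma log_sub_sub_log_sub_one_le_integral_integral (ha0 : a0 ≠ 0) (hb0 : 0 ≤ b0)
    (hx : xl < x) (hxd : x ≤ d) :
    2 / a0 ^ 2 * (log (d - xl) - log (x - xl) - 1) ≤
      ∫ y in x..d, ∫ z in y..d, (2 / (a0 * (z - xl)) ^ 2) *
        exp (-2 * ∫ t in z..y, (b0 * (t - xl)) / (a0 * (t - xl)) ^ 2) := by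
  have hd : xl < d := hx.trans_le hxd
  have hsub : uIcc x d ⊆ Ioi xl := by
    rw [uIcc_of_le hxd]
    exact fun y hy => hx.trans_le hy.1
  have hm := (continuousOn_two_div_mul_sub_sq (xl := xl) ha0).mono hsub
  have hk := (continuousOn_mul_sub_div_mul_sub_sq (xl := xl) (b0 := b0) ha0).mono hsub
  have hinv : ContinuousOn (fun y => 2 / a0 ^ 2 * ((y - xl)⁻¹ - (d - xl)⁻¹)) (uIcc x d) :=
    continuousOn_const.mul (((continuousOn_id.sub continuousOn_const).inv₀
      fun y hy => sub_ne_zero.2 (ne_of_gt (hsub hy))).sub continuousOn_const)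
  calc 2 / a0 ^ 2 * (log (d - xl) - log (x - xl) - 1)
      ≤ 2 / a0 ^ 2 * (log (d - xl) - log (x - xl) - (d - x) / (d - xl)) := by
        gcongr
        exact (div_le_one (by linarith)).2 (by linarith)
    _ = ∫ y in x..d, 2 / a0 ^ 2 * ((y - xl)⁻¹ - (d - xl)⁻¹) := by
        rw [integral_const_mul, integral_inv_sub_sub_inv hx hd]
    _ ≤ _ := by
        refine integral_mono_on hxd hinv.intervalIntegrable
          (continuousOn_integral_mul_exp_integral hm hk).intervalIntegrable fun y hy => ?_
        have hyd : uIcc y d ⊆ uIcc x d := uIcc_subset_uIcc_right (Icc_subset_uIcc hy)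
        rw [← integral_two_div_mul_sub_sq (hx.trans_le hy.1) hd]
        exact integral_le_integral_mul_exp_integral hy.2 (hm.mono hyd) (hk.mono hyd)
          (fun z _ => by positivity)
          (fun t ht => div_nonneg (mul_nonneg hb0 (by linarith [hy.1, ht.1])) (sq_nonneg _))
          (by norm_num)

end LinearCoefficients

lemma tendsto_neg_log_sub_nhdsGT (a : ℝ) : Tendsto (fun x => -log (x - a)) (𝓝[>] a) atTop := by
  have hshift : Tendsto (fun x => x - a) (𝓝[>] a) (𝓝[>] 0) := by
    have h : Tendsto (fun x => x + -a) (𝓝[>] a) (𝓝[>] (a + -a)) := map_add_right_nhdsGT.le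
    simpa only [← sub_eq_add_neg, sub_self] using h
  exact tendsto_neg_atBot_atTop.comp (tendsto_log_nhdsGT_zero.comp hshift)

/-- Feller test at the lower boundary: with `a(x) = a₀ (x - x̲)` and
`b(x) = b₀ (x - x̲)`, the Feller test function
`ψ(x) = ∫_{x*}^{x} ∫_{x*}^{y} (2/a(z)²) exp(-2 ∫_z^y b(η)/a(η)² dη) dz dy`
tends to `+∞` as `x → x̲⁺`. -/
theorem feller_test_lower_boundary
    (xl xs a0 b0 : ℝ) (hx : xl < xs) (ha0 : 0 < a0) (hb0 : 0 < b0)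
    (ψ : ℝ → ℝ)
    (hψ : ∀ x ∈ Set.Ioo xl xs, ψ x =
      ∫ y in xs..x, ∫ z in xs..y,
        (2 / (a0 * (z - xl)) ^ 2) *
          Real.exp (-2 * ∫ t in z..y, (b0 * (t - xl)) / (a0 * (t - xl)) ^ 2)) :
    Tendsto ψ (𝓝[>] xl) atTop := by
  have hlim : Tendsto (fun x => 2 / a0 ^ 2 * (log (xs - xl) - log (x - xl) - 1)) (𝓝[>] xl)
      atTop := by
    refine ((tendsto_atTop_add_const_left _ (log (xs - xl) - 1)
      (tendsto_neg_log_sub_nhdsGT xl)).const_mul_atTop (r := 2 / a0 ^ 2) (by positivity)).congr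
      fun x => ?_
    ring
  refine tendsto_atTop_mono' _ ?_ hlim
  filter_upwards [Ioo_mem_nhdsGT hx] with x hx'
  rw [hψ x hx']
  simp only [integral_symm (b := xs), integral_neg, neg_neg]
  exact log_sub_sub_log_sub_one_le_integral_integral ha0.ne' hb0.le hx'.1 hx'.2.le
end

section
/- Let 0 < a < b and let φ, H : (a,b) → ℝ be differentiable with φ > 0 on (a,b), satisfying the habit free-boundary ODE system on (a,b). Then φ is twice differentiable on (a,b) and satisfies the second-order differential equation (κ/ρ)·y²·φ''(y) + ( φ(y)^{−1/γ} − (r+ρ−δ)/ρ )·y·φ'(y) − (δ/ρ)·φ(y) + ((r+ρ)/ρ)·y = 0 for all y ∈ (a,b). -/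
/-!
Write the first equation as `φ' = g φ` with `g y = ρ (κ/ρ - H y) / (κ y)`. Since `H` is
differentiable, so is `g`, hence `φ'` is differentiable with `φ'' = (g' + g²) φ`. Substituting
`H'` from the second equation turns the claimed second-order equation into an algebraic identity.
-/

open Filter Topology

theorem hasDerivAt_deriv_of_eventually_hasDerivAt {f f' : ℝ → ℝ} {x f'' : ℝ}
    (hf : ∀ᶠ z in 𝓝 x, HasDerivAt f (f' z) z) (hf' : HasDerivAt f' f'' x) :
    HasDerivAt (deriv f) f'' x :=
  hf'.congr_of_eventuallyEq (hf.mono fun _ hz => hz.deriv)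

/-- The logarithmic derivative `φ'/φ` prescribed by the first equation of the system. -/
noncomputable def habitRate (κ ρ : ℝ) (H : ℝ → ℝ) (y : ℝ) : ℝ := ρ / (κ * y) * (κ / ρ - H y)

theorem hasDerivAt_habitRate {κ ρ y H' : ℝ} {H : ℝ → ℝ} (hκ : κ ≠ 0) (hy : y ≠ 0)
    (hH : HasDerivAt H H' y) :
    HasDerivAt (habitRate κ ρ H)
      (-(ρ / (κ * y ^ 2)) * (κ / ρ - H y) - ρ / (κ * y) * H') y := by
  have hinv : HasDerivAt (fun z => ρ / (κ * z)) (-(ρ / (κ * y ^ 2))) y :=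
    ((hasDerivAt_const y ρ).fun_div ((hasDerivAt_id' y).const_mul κ)
      (mul_ne_zero hκ hy)).congr_deriv (by field_simp; ring)
  exact (hinv.mul ((hasDerivAt_const y (κ / ρ)).fun_sub hH)).congr_deriv (by ring)

/-- After expanding, everything cancels except `φ (κ/ρ - h) (ρ/κ · (h + (κ/ρ - h)) - 1) = 0`. -/
theorem habit_second_order_identity {κ ρ r δ y φ h p c g h' : ℝ}
    (hκ : κ ≠ 0) (hρ : ρ ≠ 0) (hy : y ≠ 0) (hφ : φ ≠ 0)
    (hg : g = ρ / (κ * y) * (κ / ρ - h))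
    (hh' : h' = g * (p - h - c) + (r + ρ) / (ρ * φ) - δ / (ρ * y)) :
    (κ / ρ) * y ^ 2 * ((-(ρ / (κ * y ^ 2)) * (κ / ρ - h) - ρ / (κ * y) * h') * φ + g * (g * φ))
      + (p - c) * y * (g * φ) - (δ / ρ) * φ + ((r + ρ) / ρ) * y = 0 := by
  subst hg hh'
  field_simp
  ring

theorem phi_second_order_ode_general
    (r μ σ ρ δ γ κ : ℝ)
    (hμ : r < μ) (hσ : 0 < σ) (hρ : 0 < ρ)
    (hκ : κ = (μ - r) ^ 2 / (2 * σ ^ 2))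
    (a b : ℝ) (ha : 0 < a)
    (φ H : ℝ → ℝ)
    (hφpos : ∀ y ∈ Set.Ioo a b, 0 < φ y)
    (hφ' : ∀ y ∈ Set.Ioo a b,
      HasDerivAt φ ((ρ / (κ * y)) * (κ / ρ - H y) * φ y) y)
    (hH' : ∀ y ∈ Set.Ioo a b,
      HasDerivAt H ((ρ / (κ * y)) * (κ / ρ - H y) *
          ((φ y) ^ (-1 / γ) - H y - (r + ρ - δ) / ρ)
        + (r + ρ) / (ρ * φ y) - δ / (ρ * y)) y) :
    ∀ y ∈ Set.Ioo a b,
      DifferentiableAt ℝ (deriv φ) y ∧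
      (κ / ρ) * y ^ 2 * deriv (deriv φ) y
        + ((φ y) ^ (-1 / γ) - (r + ρ - δ) / ρ) * y * deriv φ y
        - (δ / ρ) * φ y + ((r + ρ) / ρ) * y = 0 := by
  intro y hy
  have hy0 : y ≠ 0 := (ha.trans hy.1).ne'
  have hκ0 : κ ≠ 0 := hκ ▸ div_ne_zero (pow_ne_zero 2 (sub_pos.2 hμ).ne') (by positivity)
  have hφ'' := hasDerivAt_deriv_of_eventually_hasDerivAt
    (eventually_of_mem (isOpen_Ioo.mem_nhds hy) hφ')
    ((hasDerivAt_habitRate hκ0 hy0 (hH' y hy)).mul (hφ' y hy))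
  refine ⟨hφ''.differentiableAt, ?_⟩
  rw [hφ''.deriv, (hφ' y hy).deriv]
  exact habit_second_order_identity hκ0 hρ.ne' hy0 (hφpos y hy).ne' rfl rfl

/-- If `(φ, H)` solves the habit free-boundary ODE system on `(a,b)` with `φ > 0`,
then `φ` is twice differentiable on `(a,b)` and satisfies the second-order equation
`(κ/ρ) y² φ'' + (φ^(-1/γ) - (r+ρ-δ)/ρ) y φ' - (δ/ρ) φ + ((r+ρ)/ρ) y = 0`. -/
theorem phi_second_order_ode
    (r μ σ ρ α δ γ κ : ℝ)
    (hr : 0 < r) (hμ : r < μ) (hσ : 0 < σ) (hρ : 0 < ρ)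
    (hα0 : 0 < α) (hα1 : α ≤ 1) (hδ : 0 < δ) (hγ : 1 < γ)
    (hκ : κ = (μ - r) ^ 2 / (2 * σ ^ 2))
    (a b : ℝ) (ha : 0 < a) (hab : a < b)
    (φ H : ℝ → ℝ)
    (hφpos : ∀ y ∈ Set.Ioo a b, 0 < φ y)
    (hφ' : ∀ y ∈ Set.Ioo a b,
      HasDerivAt φ ((ρ / (κ * y)) * (κ / ρ - H y) * φ y) y)
    (hH' : ∀ y ∈ Set.Ioo a b,
      HasDerivAt H ((ρ / (κ * y)) * (κ / ρ - H y) *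
          ((φ y) ^ (-1 / γ) - H y - (r + ρ - δ) / ρ)
        + (r + ρ) / (ρ * φ y) - δ / (ρ * y)) y) :
    ∀ y ∈ Set.Ioo a b,
      DifferentiableAt ℝ (deriv φ) y ∧
      (κ / ρ) * y ^ 2 * deriv (deriv φ) y
        + ((φ y) ^ (-1 / γ) - (r + ρ - δ) / ρ) * y * deriv φ y
        - (δ / ρ) * φ y + ((r + ρ) / ρ) * y = 0 :=
  phi_second_order_ode_general r μ σ ρ δ γ κ hμ hσ hρ hκ a b ha φ H hφpos hφ' hH'
end
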